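/- Let n ≥ 2. For every ψ ∈ 𝒮(ℝ) with ψ ≠ 0 there exists η ∈ 𝒮₀(ℝ) such that the constant K_{ψ,η} = (2π)^{n-1} ∫_{-∞}^{∞} conj(ψ̂(ω)) η̂(ω) |ω|^{-n} dω is finite and non-zero, i.e., the integral converges absolutely and K_{ψ,η} ≠ 0. -/

import Mathlib

/- Formalization of results from:
   "The ridgelet transform and quasiasymptotic behavior of distributions"
   by Kostadinova, Pilipović, Saneva, Vindas. -/

open MeasureTheory Filter Topology Asymptotics
open scoped RealInnerProductSpace

noncomputable section

/-- Euclidean space ℝⁿ. -/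
abbrev En (n : ℕ) : Type := EuclideanSpace ℝ (Fin n)

/-- The unit sphere 𝕊^{n-1} ⊆ ℝⁿ. -/
abbrev Sph (n : ℕ) := Metric.sphere (0 : En n) 1

/-- The surface measure on the unit sphere 𝕊^{n-1}. -/
def sphereMeasure (n : ℕ) : Measure (Sph n) := (volume : Measure (En n)).toSphere

/-- The Lizorkin space `𝒮₀(ℝ)` of Schwartz functions on ℝ with all vanishing moments. -/
def LizorkinSubmodule1 : Submodule ℂ (SchwartzMap ℝ ℂ) where
  carrier := {φ | ∀ m : ℕ,
      Integrable (fun x : ℝ => (x ^ m : ℝ) • φ x) ∧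
      ∫ x : ℝ, (x ^ m : ℝ) • φ x = 0}
  add_mem' := by
    intro f g hf hg m
    obtain ⟨hfi, hfv⟩ := hf m
    obtain ⟨hgi, hgv⟩ := hg m
    constructor
    · exact (hfi.add hgi).congr (Eventually.of_forall fun x => by simp [smul_add])
    · have : (fun x : ℝ => (x ^ m : ℝ) • (f + g) x)
          = fun x : ℝ => (x ^ m : ℝ) • f x + (x ^ m : ℝ) • g x := by
        funext x; simp [smul_add]
      rw [this, integral_add hfi hgi, hfv, hgv, add_zero]
  zero_mem' := by
    intro m
    constructor
    · simp
    · simp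
  smul_mem' := by
    intro c f hf m
    obtain ⟨hfi, hfv⟩ := hf m
    have hfun : (fun x : ℝ => (x ^ m : ℝ) • (c • f) x)
        = c • fun x : ℝ => (x ^ m : ℝ) • f x := by
      funext x
      simp only [SchwartzMap.smul_apply, Pi.smul_apply, smul_eq_mul, Complex.real_smul]
      ring
    constructor
    · rw [hfun]; exact hfi.smul c
    · rw [hfun]
      show (∫ x : ℝ, c • ((x ^ m : ℝ) • f x)) = 0
      rw [integral_smul, hfv, smul_zero]

/-- Lizorkin test functions on ℝ. -/
abbrev Lizorkin1 := ↥LizorkinSubmodule1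

/-- The Fourier transform `ĝ(ω) = ∫ g(t) e^{-iωt} dt` (classical convention). -/
def classicalFT (g : ℝ → ℂ) (ω : ℝ) : ℂ :=
  ∫ t : ℝ, Complex.exp (-(Complex.I * (ω : ℂ) * (t : ℂ))) * g t

/-!
Since `ψ ≠ 0`, its Fourier transform is a nonzero continuous function, hence nonzero at some
`ξ₀ ≠ 0`. Choose `η` with `η̂ = χ ψ̂` for a smooth bump `χ ≥ 0` with `χ ξ₀ = 1` that vanishes near
the origin. Then `η̂` vanishes near `0`, and the moments of `η` are, up to nonzero constants, the
derivatives of `η̂` at `0`, so `η ∈ 𝒮₀(ℝ)`. The integrand of `K_{ψ,η}` is `χ |ψ̂|² |ω|⁻ⁿ` (after the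
rescaling `ω = 2πξ` between the two Fourier conventions): continuous because it vanishes near `0`,
compactly supported, nonnegative and positive at `2πξ₀`. So the integral converges and is positive.
-/

open FourierTransform SchwartzMap

lemma Continuous.exists_ne_apply_ne_zero {X E : Type*} [TopologicalSpace X] [TopologicalSpace E]
    [T2Space E] [Zero E] {f : X → E} (hf : Continuous f) (hf0 : f ≠ 0) (a : X)
    [(𝓝[≠] a).NeBot] : ∃ x ≠ a, f x ≠ 0 := by
  by_contra! h
  exact hf0 (hf.ext_on (dense_compl_singleton a) continuous_const h)

lemma HasCompactSupport.comp_div {β : Type*} [Zero β] {f : ℝ → β}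
    (hf : HasCompactSupport f) {c : ℝ} (hc : c ≠ 0) :
    HasCompactSupport fun x => f (x / c) := by
  simpa only [div_eq_inv_mul, smul_eq_mul] using hf.comp_smul (inv_ne_zero hc)

lemma Filter.EventuallyEq.comp_div_nhds_zero {β : Type*} [Zero β] {f : ℝ → β}
    (hf : f =ᶠ[𝓝 0] 0) (c : ℝ) :
    (fun x => f (x / c)) =ᶠ[𝓝 0] 0 :=
  hf.comp_tendsto (by simpa using (continuous_id.div_const c).tendsto 0)

open scoped ContDiff in
lemma exists_contDiff_hasCompactSupport_eventuallyEq_zero {E : Type*} [NormedAddCommGroup E]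
    [NormedSpace ℝ E] [FiniteDimensional ℝ E] {a : E} (ha : a ≠ 0) :
    ∃ χ : E → ℝ, ContDiff ℝ ∞ χ ∧ HasCompactSupport χ ∧ 0 ≤ χ ∧ χ a = 1 ∧ χ =ᶠ[𝓝 0] 0 := by
  obtain ⟨χ, hsupp, hc, hsmooth, hrange, ha⟩ :=
    exists_contDiff_tsupport_subset (n := ⊤) (isOpen_ne.mem_nhds ha)
  refine ⟨χ, hsmooth, hc, fun x => (hrange ⟨x, rfl⟩).1, ha, ?_⟩
  exact notMem_tsupport_iff_eventuallyEq.1 fun h => hsupp h rfl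

lemma continuous_mul_inv_abs_pow {u : ℝ → ℝ} (hu : Continuous u) (hu0 : u =ᶠ[𝓝 0] 0) (n : ℕ) :
    Continuous fun x => u x * (|x| ^ n)⁻¹ := by
  refine continuous_iff_continuousAt.2 fun x => ?_
  rcases eq_or_ne x 0 with rfl | hx
  · refine (continuousAt_const (y := (0 : ℝ))).congr (hu0.mono fun y hy => ?_)
    simp [hy]
  · exact hu.continuousAt.mul
      ((continuous_abs.pow n).continuousAt.inv₀ (pow_ne_zero n (abs_ne_zero.2 hx)))

lemma integrable_mul_inv_abs_pow {u : ℝ → ℝ} (hu : Continuous u) (hc : HasCompactSupport u)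
    (hu0 : u =ᶠ[𝓝 0] 0) (n : ℕ) : Integrable fun x => u x * (|x| ^ n)⁻¹ :=
  (continuous_mul_inv_abs_pow hu hu0 n).integrable_of_hasCompactSupport hc.mul_right

lemma integral_mul_inv_abs_pow_pos {u : ℝ → ℝ} (hu : Continuous u) (hc : HasCompactSupport u)
    (hu0 : u =ᶠ[𝓝 0] 0) (hnonneg : 0 ≤ u) {x₀ : ℝ} (hx₀ : u x₀ ≠ 0) (n : ℕ) :
    0 < ∫ x, u x * (|x| ^ n)⁻¹ := by
  refine (continuous_mul_inv_abs_pow hu hu0 n).integral_pos_of_hasCompactSupport_nonneg_nonzero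
    hc.mul_right (fun x => mul_nonneg (hnonneg x) (by positivity)) (x := x₀) ?_
  have hx₀_ne : x₀ ≠ 0 := fun h => hx₀ (by simpa [h] using hu0.self_of_nhds)
  exact mul_ne_zero hx₀ (inv_ne_zero (pow_ne_zero n (abs_ne_zero.2 hx₀_ne)))

lemma classicalFT_eq_fourier (g : ℝ → ℂ) (ω : ℝ) :
    classicalFT g ω = 𝓕 g (ω / (2 * Real.pi)) := by
  rw [Real.fourier_real_eq_integral_exp_smul, classicalFT]
  congr 1 with t
  rw [smul_eq_mul]
  congr 2
  push_cast
  field_simp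

theorem FourierTransform.fourier_ne_zero {E F : Type*} [AddCommGroup E] [AddCommGroup F]
    [FourierTransform E F] [FourierTransformInv F E] [FourierInvAdd F E] [FourierPair E F]
    {f : E} (hf : f ≠ 0) : 𝓕 f ≠ 0 := fun h =>
  hf (by rw [← fourierInv_fourier_eq (F := F) f, h, fourierInv_zero])

lemma exists_fourier_eq_smul {V E : Type*} [NormedAddCommGroup V] [InnerProductSpace ℝ V]
    [FiniteDimensional ℝ V] [MeasurableSpace V] [BorelSpace V] [NormedAddCommGroup E]
    [NormedSpace ℂ E] [CompleteSpace E] {χ : V → ℝ} (hχ : χ.HasTemperateGrowth) (Ψ : 𝓢(V, E)) :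
    ∃ η : 𝓢(V, E), ∀ ξ, 𝓕 (η : V → E) ξ = χ ξ • Ψ ξ :=
  ⟨𝓕⁻ (smulLeftCLM E χ Ψ), fun ξ => by
    rw [← fourier_coe, fourier_fourierInv_eq, smulLeftCLM_apply_apply hχ]⟩

lemma SchwartzMap.integrable_pow_smul {E : Type*} [NormedAddCommGroup E] [NormedSpace ℝ E] (η : 𝓢(ℝ, E))
    (m : ℕ) : Integrable fun x : ℝ => (x ^ m : ℝ) • η x := by
  refine (η.integrable_pow_mul volume m).mono' (by fun_prop) (.of_forall fun x => ?_)
  simp [norm_smul]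

lemma mem_lizorkinSubmodule1_of_fourier_eventuallyEq_zero {η : 𝓢(ℝ, ℂ)}
    (h : 𝓕 (η : ℝ → ℂ) =ᶠ[𝓝 0] 0) : η ∈ LizorkinSubmodule1 := by
  intro m
  refine ⟨integrable_pow_smul η m, ?_⟩
  have hderiv : iteratedDeriv m (𝓕 (η : ℝ → ℂ)) 0 = 0 := by
    rw [h.iteratedDeriv_eq m, iteratedDeriv_const_zero]
  rw [Real.iteratedDeriv_fourier (N := ⊤) (fun k _ => integrable_pow_smul η k) le_top,
    Real.fourier_real_eq] at hderiv
  have hmoment : (fun x : ℝ => ((-2 : ℂ) * Real.pi * Complex.I * x) ^ m • η x)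
      = fun x : ℝ => ((-2 : ℂ) * Real.pi * Complex.I) ^ m • ((x ^ m : ℝ) • η x) := by
    funext x
    simp only [smul_eq_mul, Complex.real_smul, mul_pow]
    push_cast
    ring
  simp only [mul_zero, neg_zero, AddChar.map_zero_eq_one, one_smul] at hderiv
  rw [hmoment, integral_smul, smul_eq_zero] at hderiv
  refine hderiv.resolve_left (pow_ne_zero m ?_)
  simp [Complex.ext_iff, Real.pi_ne_zero]

lemma conj_classicalFT_mul_classicalFT {ψ η : 𝓢(ℝ, ℂ)} {χ : ℝ → ℝ}
    (h : ∀ ξ, 𝓕 (η : ℝ → ℂ) ξ = χ ξ • 𝓕 ψ ξ) (ω : ℝ) :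
    (starRingEnd ℂ) (classicalFT (fun t => ψ t) ω) * classicalFT (fun t => η t) ω
      = ((χ (ω / (2 * Real.pi)) * ‖𝓕 ψ (ω / (2 * Real.pi))‖ ^ 2 : ℝ) : ℂ) := by
  have hψ : classicalFT (fun t => ψ t) ω = 𝓕 ψ (ω / (2 * Real.pi)) := classicalFT_eq_fourier _ ω
  rw [hψ, classicalFT_eq_fourier, h, Complex.real_smul, mul_left_comm, Complex.conj_mul']
  push_cast
  rfl

theorem exists_reconstruction_neuronal_activation_function_general
    (n : ℕ)
    (ψ : SchwartzMap ℝ ℂ) (hψ : ψ ≠ 0) :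
    ∃ η : SchwartzMap ℝ ℂ, η ∈ LizorkinSubmodule1 ∧
      Integrable (fun ω : ℝ => (starRingEnd ℂ) (classicalFT (fun t => ψ t) ω)
        * classicalFT (fun t => η t) ω * (((|ω| ^ n : ℝ) : ℂ))⁻¹) ∧
      ((2 * Real.pi) ^ (n - 1) : ℝ) •
        (∫ ω : ℝ, (starRingEnd ℂ) (classicalFT (fun t => ψ t) ω)
          * classicalFT (fun t => η t) ω * (((|ω| ^ n : ℝ) : ℂ))⁻¹) ≠ 0 := by
  obtain ⟨ξ₀, hξ₀, hψξ₀⟩ := (𝓕 ψ).continuous.exists_ne_apply_ne_zero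
    (DFunLike.coe_injective.ne (fourier_ne_zero hψ)) 0
  obtain ⟨χ, hχ_smooth, hχ_supp, hχ_nonneg, hχξ₀, hχ0⟩ :=
    exists_contDiff_hasCompactSupport_eventuallyEq_zero hξ₀
  obtain ⟨η, hη⟩ := exists_fourier_eq_smul (hχ_supp.hasTemperateGrowth hχ_smooth) (𝓕 ψ)
  refine ⟨η, mem_lizorkinSubmodule1_of_fourier_eventuallyEq_zero
    (hχ0.mono fun ξ h => by simp [hη, h]), ?_⟩
  set u : ℝ → ℝ := fun ω => χ (ω / (2 * Real.pi)) * ‖𝓕 ψ (ω / (2 * Real.pi))‖ ^ 2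
  have hintegrand : (fun ω : ℝ => (starRingEnd ℂ) (classicalFT (fun t => ψ t) ω)
      * classicalFT (fun t => η t) ω * (((|ω| ^ n : ℝ) : ℂ))⁻¹)
      = fun ω => ((u ω * (|ω| ^ n)⁻¹ : ℝ) : ℂ) := by
    funext ω
    rw [conj_classicalFT_mul_classicalFT hη]
    push_cast [u]
    rfl
  have hu : Continuous u := by have := hχ_smooth.continuous; fun_prop
  have hu_supp : HasCompactSupport u := (hχ_supp.comp_div Real.two_pi_pos.ne').mul_right
  have hu0 : u =ᶠ[𝓝 0] 0 := (hχ0.comp_div_nhds_zero (2 * Real.pi)).mono fun ω h => by simp [u, h]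
  have hu_nonneg : 0 ≤ u := fun ω => mul_nonneg (hχ_nonneg _) (sq_nonneg _)
  have hu_ne : u (2 * Real.pi * ξ₀) ≠ 0 := by simp [u, Real.two_pi_pos.ne', hψξ₀, hχξ₀]
  rw [hintegrand, integral_complex_ofReal]
  exact ⟨(integrable_mul_inv_abs_pow hu hu_supp hu0 n).ofReal, smul_ne_zero (by positivity)
    (Complex.ofReal_ne_zero.2 (integral_mul_inv_abs_pow_pos hu hu_supp hu0 hu_nonneg hu_ne n).ne')⟩

/-- **after Definition 2.1.**  Let n ≥ 2.  Every nonzero `ψ ∈ 𝒮(ℝ)` admits a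
reconstruction neuronal activation function `η ∈ 𝒮₀(ℝ)`: the constant
`K_{ψ,η} = (2π)^{n-1} ∫ conj(ψ̂(ω)) η̂(ω) |ω|^{-n} dω` is finite (the integral converges
absolutely) and non-zero. -/
theorem exists_reconstruction_neuronal_activation_function
    (n : ℕ) (hn : 2 ≤ n)
    (ψ : SchwartzMap ℝ ℂ) (hψ : ψ ≠ 0) :
    ∃ η : SchwartzMap ℝ ℂ, η ∈ LizorkinSubmodule1 ∧
      Integrable (fun ω : ℝ => (starRingEnd ℂ) (classicalFT (fun t => ψ t) ω)
        * classicalFT (fun t => η t) ω * (((|ω| ^ n : ℝ) : ℂ))⁻¹) ∧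
      ((2 * Real.pi) ^ (n - 1) : ℝ) •
        (∫ ω : ℝ, (starRingEnd ℂ) (classicalFT (fun t => ψ t) ω)
          * classicalFT (fun t => η t) ω * (((|ω| ^ n : ℝ) : ℂ))⁻¹) ≠ 0 :=
  exists_reconstruction_neuronal_activation_function_general n ψ hψ
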